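/- arXiv:2312.03583 — 7 statements merged into one kernel-verified Lean document; each statement's English description precedes it below -/
import Mathlib

section
/- Let C be a compact convex subset of ℝⁿ (with the standard inner product) and let α > 0. Then the following two conditions are equivalent: (a) C is α-strongly convex; (b) for every v ∈ C, every vector w in the normal cone N_C(v), and every x ∈ C, one has ⟨w, v − x⟩ ≥ α ‖w‖ ‖v − x‖². -/
open RealInnerProductSpace

/-- For a compact convex set `C ⊆ ℝⁿ` and `α > 0`, `α`-strong convexity of `C`
is equivalent to: for every `v ∈ C`, every `w` in the normal cone to `C` at `v`, and every
`x ∈ C`, one has `⟪w, v - x⟫ ≥ α ‖w‖ ‖v - x‖²`. -/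
theorem strong_convexity_iff_normal_cone_scaling {n : ℕ}
    (C : Set (EuclideanSpace ℝ (Fin n))) (α : ℝ)
    (hC : IsCompact C) (hconv : Convex ℝ C) (hα : 0 < α) :
    (∀ x ∈ C, ∀ y ∈ C, ∀ t ∈ Set.Icc (0 : ℝ) 1, ∀ z : EuclideanSpace ℝ (Fin n), ‖z‖ = 1 →
        (1 - t) • x + t • y + (α * t * (1 - t) * ‖x - y‖ ^ 2) • z ∈ C) ↔
    (∀ v ∈ C, ∀ w : EuclideanSpace ℝ (Fin n), (∀ u ∈ C, ⟪w, u - v⟫ ≤ 0) →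
        ∀ x ∈ C, ⟪w, v - x⟫ ≥ α * ‖w‖ * ‖v - x‖ ^ 2) := by
  constructor
  · -- strong convexity → normal cone scaling
    intro hsc v hv w hw x hx
    rcases eq_or_ne w 0 with rfl | hw0
    · simp
    have hwpos : (0:ℝ) < ‖w‖ := norm_pos_iff.mpr hw0
    set z : EuclideanSpace ℝ (Fin n) := ‖w‖⁻¹ • w with hz
    have hznorm : ‖z‖ = 1 := by
      rw [hz, norm_smul, norm_inv, norm_norm, inv_mul_cancel₀ hwpos.ne']
    have hwz : ⟪w, z⟫ = ‖w‖ := by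
      rw [hz, real_inner_smul_right, real_inner_self_eq_norm_sq]
      field_simp
    have key : ∀ t : ℝ, 0 < t → t < 1 →
        ⟪w, x - v⟫ + α * (1 - t) * ‖v - x‖ ^ 2 * ‖w‖ ≤ 0 := by
      intro t ht0 ht1
      have hmem := hsc v hv x hx t ⟨ht0.le, ht1.le⟩ z hznorm
      have h2 := hw _ hmem
      have hinner : ⟪w, ((1 - t) • v + t • x + (α * t * (1 - t) * ‖v - x‖ ^ 2) • z) - v⟫
          = t * (⟪w, x - v⟫ + α * (1 - t) * ‖v - x‖ ^ 2 * ‖w‖) := by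
        simp only [inner_sub_right, inner_add_right, real_inner_smul_right, hwz]
        ring
      rw [hinner] at h2
      nlinarith
    have hvx : ⟪w, v - x⟫ = -⟪w, x - v⟫ := by
      rw [← inner_neg_right, neg_sub]
    rw [ge_iff_le, hvx]
    have hD : (0:ℝ) ≤ α * ‖v - x‖ ^ 2 * ‖w‖ := by positivity
    refine le_of_forall_pos_le_add ?_
    intro ε hε
    set D : ℝ := α * ‖v - x‖ ^ 2 * ‖w‖ with hDdef
    set t : ℝ := min (1/2) (ε / (D + 1)) with htdef
    have ht0 : 0 < t := lt_min (by norm_num) (div_pos hε (by linarith))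
    have ht1 : t < 1 := lt_of_le_of_lt (min_le_left _ _) (by norm_num)
    have hk := key t ht0 ht1
    have htD : t * D ≤ ε := by
      have h1 : t ≤ ε / (D + 1) := min_le_right _ _
      have h2 : t * D ≤ (ε / (D + 1)) * D :=
        mul_le_mul_of_nonneg_right h1 hD
      have h3 : (ε / (D + 1)) * D ≤ ε := by
        rw [div_mul_eq_mul_div, div_le_iff₀ (by linarith)]
        nlinarith
      linarith
    have : α * (1 - t) * ‖v - x‖ ^ 2 * ‖w‖ = D - t * D := by ring
    have hgoal : α * ‖w‖ * ‖v - x‖ ^ 2 = D := by ring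
    linarith
  · -- normal cone scaling → strong convexity
    intro h x hx y hy t ht z hz
    by_contra hp
    set c : ℝ := α * t * (1 - t) * ‖x - y‖ ^ 2 with hc
    have hc0 : 0 ≤ c := by
      have := ht.1; have := ht.2
      have h1t : 0 ≤ 1 - t := by linarith
      positivity
    set p : EuclideanSpace ℝ (Fin n) := (1 - t) • x + t • y + c • z with hpdef
    obtain ⟨v, hvC, hvdist⟩ :=
      exists_norm_eq_iInf_of_complete_convex ⟨x, hx⟩ hC.isComplete hconv p
    set w : EuclideanSpace ℝ (Fin n) := p - v with hwdef
    have hw : ∀ u ∈ C, ⟪w, u - v⟫ ≤ 0 :=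
      (norm_eq_iInf_iff_real_inner_le_zero hconv hvC).mp hvdist
    have hpv : p ≠ v := fun hpv => hp (hpv ▸ hvC)
    have hwpos : (0:ℝ) < ‖w‖ := by
      rw [hwdef, norm_pos_iff]
      exact sub_ne_zero.mpr hpv
    have h1 := h v hvC w hw x hx
    have h2 := h v hvC w hw y hy
    have hcs : ⟪w, z⟫ ≤ ‖w‖ := by
      have := real_inner_le_norm w z
      rwa [hz, mul_one] at this
    -- geometric inequality
    have hxy : x - y = (v - y) - (v - x) := by abel
    have hgeom : t * (1 - t) * ‖x - y‖ ^ 2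
        ≤ (1 - t) * ‖v - x‖ ^ 2 + t * ‖v - y‖ ^ 2 := by
      have hns : ‖(v - y) - (v - x)‖ ^ 2
          = ‖v - y‖ ^ 2 - 2 * ⟪v - y, v - x⟫ + ‖v - x‖ ^ 2 :=
        norm_sub_sq_real (v - y) (v - x)
      have habs : |⟪v - y, v - x⟫| ≤ ‖v - y‖ * ‖v - x‖ := abs_real_inner_le_norm _ _
      have hlow : -(‖v - y‖ * ‖v - x‖) ≤ ⟪v - y, v - x⟫ := by
        have := neg_abs_le (⟪v - y, v - x⟫ : ℝ); linarith
      have h5 : 0 ≤ t * (1 - t) * (⟪v - y, v - x⟫ + ‖v - y‖ * ‖v - x‖) := by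
        have h1t : 0 ≤ 1 - t := by linarith [ht.2]
        have := mul_nonneg (mul_nonneg ht.1 h1t) (by linarith : (0:ℝ) ≤ ⟪v - y, v - x⟫ + ‖v - y‖ * ‖v - x‖)
        linarith
      rw [hxy, hns]
      nlinarith [sq_nonneg ((1 - t) * ‖v - x‖ - t * ‖v - y‖)]
    -- key identity
    have hid : ‖w‖ ^ 2 = -((1 - t) * ⟪w, v - x⟫ + t * ⟪w, v - y⟫) + c * ⟪w, z⟫ := by
      have : ‖w‖ ^ 2 = ⟪w, p - v⟫ := by
        rw [← hwdef, real_inner_self_eq_norm_sq]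
      rw [this, hpdef]
      simp only [inner_sub_right, inner_add_right, real_inner_smul_right]
      ring
    have hαw : (0:ℝ) ≤ α * ‖w‖ := by positivity
    have e1 : (1 - t) * (α * ‖w‖ * ‖v - x‖ ^ 2) ≤ (1 - t) * ⟪w, v - x⟫ :=
      mul_le_mul_of_nonneg_left h1 (by linarith [ht.2])
    have e2 : t * (α * ‖w‖ * ‖v - y‖ ^ 2) ≤ t * ⟪w, v - y⟫ :=
      mul_le_mul_of_nonneg_left h2 ht.1
    have e3 : c * ⟪w, z⟫ ≤ c * ‖w‖ := mul_le_mul_of_nonneg_left hcs hc0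
    have e4 : α * ‖w‖ * (t * (1 - t) * ‖x - y‖ ^ 2)
        ≤ α * ‖w‖ * ((1 - t) * ‖v - x‖ ^ 2 + t * ‖v - y‖ ^ 2) :=
      mul_le_mul_of_nonneg_left hgeom hαw
    have hw2 : 0 < ‖w‖ ^ 2 := by positivity
    have hcw : c * ‖w‖ = α * ‖w‖ * (t * (1 - t) * ‖x - y‖ ^ 2) := by rw [hc]; ring
    nlinarith
end

section
/- Let E = ℝⁿ with the standard inner product, let f : E → ℝ be differentiable, L-smooth, and μ-strongly convex (L, μ > 0), let x* be a global minimizer of f with f* = f(x*), and let s > 0. Set Q_s = { x ∈ E : f(x) − f* ≤ s }. Then Q_s is a strongly convex set in the following sense: for all x, y ∈ Q_s, all t ∈ [0,1], and all z ∈ E with ‖z − ((1−t)x + t y)‖ ≤ (μ / (2√(2 s L))) · t(1−t) ‖x − y‖², one has z ∈ Q_s. -/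
open RealInnerProductSpace

set_option maxHeartbeats 1600000

/-- Sublevel sets `Q_s = {x | f x - f* ≤ s}` of a differentiable, `L`-smooth,
`μ`-strongly convex function on `ℝⁿ` are `μ/(2√(2sL))`-strongly convex sets. -/
theorem sublevel_sets_strongly_convex {n : ℕ}
    (f : EuclideanSpace ℝ (Fin n) → ℝ) (L μ s : ℝ)
    (hL : 0 < L) (hμ : 0 < μ) (hs : 0 < s)
    (hdiff : Differentiable ℝ f)
    (hsmooth : ∀ x y, |f y - f x - ⟪gradient f x, y - x⟫| ≤ L / 2 * ‖y - x‖ ^ 2)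
    (hstrconv : ∀ x y, ∀ t ∈ Set.Icc (0 : ℝ) 1,
        f ((1 - t) • x + t • y) ≤ (1 - t) * f x + t * f y - μ / 2 * t * (1 - t) * ‖x - y‖ ^ 2)
    (xstar : EuclideanSpace ℝ (Fin n)) (hmin : ∀ y, f xstar ≤ f y) :
    ∀ x ∈ {u : EuclideanSpace ℝ (Fin n) | f u - f xstar ≤ s},
      ∀ y ∈ {u : EuclideanSpace ℝ (Fin n) | f u - f xstar ≤ s},
        ∀ t ∈ Set.Icc (0 : ℝ) 1, ∀ z : EuclideanSpace ℝ (Fin n),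
          ‖z - ((1 - t) • x + t • y)‖ ≤
              μ / (2 * Real.sqrt (2 * s * L)) * (t * (1 - t) * ‖x - y‖ ^ 2) →
            z ∈ {u : EuclideanSpace ℝ (Fin n) | f u - f xstar ≤ s} := by
  have hL' : L ≠ 0 := ne_of_gt hL
  -- gradient norm bound: ‖∇f u‖² ≤ 2L (f u - f*)
  have hgrad : ∀ u, ‖gradient f u‖ ^ 2 ≤ 2 * L * (f u - f xstar) := by
    intro u
    have h := hsmooth u (u - (1 / L) • gradient f u)
    have hsub : u - (1 / L) • gradient f u - u = -((1 / L) • gradient f u) := by abel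
    rw [hsub] at h
    have hinner : ⟪gradient f u, -((1 / L) • gradient f u)⟫
        = -(1 / L * ‖gradient f u‖ ^ 2) := by
      rw [inner_neg_right, real_inner_smul_right, real_inner_self_eq_norm_sq]
    have hnorm : ‖-((1 / L) • gradient f u)‖ ^ 2 = (1 / L) ^ 2 * ‖gradient f u‖ ^ 2 := by
      rw [norm_neg, norm_smul, Real.norm_eq_abs, mul_pow, sq_abs]
    rw [hinner, hnorm] at h
    have h' := (abs_le.mp h).2
    have hmin' := hmin (u - (1 / L) • gradient f u)
    have heq : L / 2 * ((1 / L) ^ 2 * ‖gradient f u‖ ^ 2) - 1 / L * ‖gradient f u‖ ^ 2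
        = -(‖gradient f u‖ ^ 2 / (2 * L)) := by
      field_simp
      ring
    have h'' : ‖gradient f u‖ ^ 2 / (2 * L) ≤ f u - f xstar := by linarith
    calc ‖gradient f u‖ ^ 2 = ‖gradient f u‖ ^ 2 / (2 * L) * (2 * L) := by field_simp
      _ ≤ (f u - f xstar) * (2 * L) := by
          exact mul_le_mul_of_nonneg_right h'' (by positivity)
      _ = 2 * L * (f u - f xstar) := by ring
  intro x hx y hy t ht z hz
  simp only [Set.mem_setOf_eq] at hx hy ⊢
  obtain ⟨ht0, ht1⟩ := ht
  set m := (1 - t) • x + t • y with hm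
  set r := t * (1 - t) * ‖x - y‖ ^ 2 with hr
  have hr0 : 0 ≤ r := by
    have h1 : 0 ≤ t * (1 - t) := mul_nonneg ht0 (by linarith)
    rw [hr]
    positivity
  set a := μ / 2 * r with ha
  have ha0 : 0 ≤ a := by rw [ha]; positivity
  set K := Real.sqrt (2 * s * L) with hK
  have hKpos : 0 < K := Real.sqrt_pos.mpr (by positivity)
  have hK2 : K * K = 2 * s * L := Real.mul_self_sqrt (by positivity)
  set δ := ‖z - m‖ with hδ
  have hδ0 : 0 ≤ δ := norm_nonneg _
  have hδK : δ * K ≤ a := by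
    have h1 : μ / (2 * K) * r * K = a := by
      rw [ha]; field_simp
    calc δ * K ≤ μ / (2 * K) * r * K := mul_le_mul_of_nonneg_right hz hKpos.le
      _ = a := h1
  -- f m - f* ≤ s - a
  have hfm : f m - f xstar ≤ s - a := by
    have h := hstrconv x y t ⟨ht0, ht1⟩
    have heq : μ / 2 * t * (1 - t) * ‖x - y‖ ^ 2 = a := by rw [ha, hr]; ring
    rw [heq] at h
    nlinarith [h, hx, hy, ht0, ht1]
  set G := f m - f xstar with hG
  have hG0 : 0 ≤ G := by have := hmin m; rw [hG]; linarith
  have haS : a ≤ s := by linarith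
  set S := Real.sqrt (2 * L * G) with hS
  set T := Real.sqrt (2 * L * (s - a)) with hT
  have hS0 : 0 ≤ S := Real.sqrt_nonneg _
  have hT0 : 0 ≤ T := Real.sqrt_nonneg _
  have hS2 : S * S = 2 * L * G := Real.mul_self_sqrt (by positivity)
  have hT2 : T * T = 2 * L * (s - a) := Real.mul_self_sqrt (by nlinarith)
  have hST : S ≤ T := Real.sqrt_le_sqrt (by nlinarith)
  -- ‖∇f m‖ ≤ S
  have hgm : ‖gradient f m‖ ≤ S := by
    have h : ‖gradient f m‖ ^ 2 ≤ 2 * L * G := by rw [hG]; exact hgrad m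
    have h2 : ‖gradient f m‖ = Real.sqrt (‖gradient f m‖ ^ 2) :=
      (Real.sqrt_sq (norm_nonneg _)).symm
    rw [h2, hS]
    exact Real.sqrt_le_sqrt h
  -- f z ≤ f m + S δ + L/2 δ²
  have hfz : f z ≤ f m + S * δ + L / 2 * δ ^ 2 := by
    have h := (abs_le.mp (hsmooth m z)).2
    have hcs : ⟪gradient f m, z - m⟫ ≤ ‖gradient f m‖ * δ := by
      rw [hδ]; exact real_inner_le_norm _ _
    have h3 : ‖gradient f m‖ * δ ≤ S * δ := mul_le_mul_of_nonneg_right hgm hδ0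
    rw [← hδ] at h
    linarith
  -- key: T δ + L/2 δ² ≤ a
  have hTK : T * K ≤ 2 * s * L - a * L / 2 := by
    have h1 : 0 ≤ 2 * s * L - a * L / 2 := by nlinarith
    have h2 : (T * K) * (T * K) ≤ (2 * s * L - a * L / 2) * (2 * s * L - a * L / 2) := by
      have h3 : (T * K) * (T * K) = (T * T) * (K * K) := by ring
      rw [h3, hT2, hK2]
      nlinarith [mul_nonneg (mul_nonneg ha0 hs.le) (mul_pos hL hL).le, sq_nonneg (a * L)]
    nlinarith [mul_nonneg hT0 hKpos.le]
  have hδK0 : 0 ≤ δ * K := mul_nonneg hδ0 hKpos.le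
  have hkey : T * δ + L / 2 * δ ^ 2 ≤ a := by
    have hK2pos : 0 < K * K := by positivity
    have h1 : T * δ * (K * K) = (T * K) * (δ * K) := by ring
    have h2 : (T * K) * (δ * K) ≤ (2 * s * L - a * L / 2) * a := by
      calc (T * K) * (δ * K) ≤ (2 * s * L - a * L / 2) * (δ * K) :=
            mul_le_mul_of_nonneg_right hTK hδK0
        _ ≤ (2 * s * L - a * L / 2) * a := by
            apply mul_le_mul_of_nonneg_left hδK
            nlinarith
    have h3 : L / 2 * δ ^ 2 * (K * K) ≤ L / 2 * a ^ 2 := by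
      have h5 : (δ * K) * (δ * K) ≤ a * a := mul_le_mul hδK hδK hδK0 ha0
      nlinarith [hL.le, h5]
    have h4 : a * (K * K) = (2 * s * L - a * L / 2) * a + L / 2 * a ^ 2 := by
      rw [hK2]; ring
    have hprod : (T * δ + L / 2 * δ ^ 2) * (K * K) ≤ a * (K * K) := by
      linarith [h1, h2, h3, h4]
    exact le_of_mul_le_mul_right hprod hK2pos
  have hSδ : S * δ ≤ T * δ := mul_le_mul_of_nonneg_right hST hδ0
  linarith
end

section
/- Let E = ℝⁿ with the standard inner product, let f : E → ℝ be differentiable and L-smooth (L > 0), and suppose f attains its infimum f* = inf f. Then for all x, y ∈ E, f(y) − f* ≤ ( √(f(x) − f*) + √(L/2) · ‖y − x‖ )². -/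
open RealInnerProductSpace

/-- If `f : ℝⁿ → ℝ` is differentiable and `L`-smooth and attains its infimum
`f* = f x*`, then for all `x, y`, `f y - f* ≤ (√(f x - f*) + √(L/2)·‖y - x‖)²`. -/
theorem smooth_value_growth_bound {n : ℕ}
    (f : EuclideanSpace ℝ (Fin n) → ℝ) (L : ℝ) (hL : 0 < L)
    (hdiff : Differentiable ℝ f)
    (hsmooth : ∀ x y, |f y - f x - ⟪gradient f x, y - x⟫| ≤ L / 2 * ‖y - x‖ ^ 2)
    (xstar : EuclideanSpace ℝ (Fin n)) (hmin : ∀ y, f xstar ≤ f y) :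
    ∀ x y, f y - f xstar ≤
      (Real.sqrt (f x - f xstar) + Real.sqrt (L / 2) * ‖y - x‖) ^ 2 := by
  intro x y
  set g := gradient f x with hg
  have ha : 0 ≤ f x - f xstar := sub_nonneg.2 (hmin x)
  have hL2 : (0:ℝ) ≤ L / 2 := by positivity
  have hgb : ‖g‖ ≤ 2 * Real.sqrt (L/2) * Real.sqrt (f x - f xstar) := by
    have hzx : x - (1/L) • g - x = -((1/L) • g) := by abel
    have h2 := (abs_le.1 (hsmooth x (x - (1/L) • g))).2
    rw [hzx] at h2
    rw [inner_neg_right, real_inner_smul_right, real_inner_self_eq_norm_sq,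
      norm_neg, norm_smul, Real.norm_eq_abs, abs_of_pos (by positivity : (0:ℝ) < 1/L)] at h2
    rw [← hg] at h2
    have hmin' := hmin (x - (1/L) • g)
    have hgsq : ‖g‖^2 ≤ 2*L*(f x - f xstar) := by
      have h3 : L / 2 * (1/L * ‖g‖)^2 = ‖g‖^2 / (2*L) := by field_simp
      have h4 : 1/L * ‖g‖^2 - ‖g‖^2/(2*L) = ‖g‖^2/(2*L) := by field_simp; ring
      have key : ‖g‖^2 / (2*L) ≤ f x - f xstar := by linarith
      rw [div_le_iff₀ (by positivity : (0:ℝ) < 2*L)] at key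
      linarith
    have hB : (2 * Real.sqrt (L/2) * Real.sqrt (f x - f xstar))^2 = 2*L*(f x - f xstar) := by
      rw [mul_pow, mul_pow, Real.sq_sqrt hL2, Real.sq_sqrt ha]; ring
    nlinarith [Real.sqrt_nonneg (L/2), Real.sqrt_nonneg (f x - f xstar), norm_nonneg g,
      mul_nonneg (Real.sqrt_nonneg (L/2)) (Real.sqrt_nonneg (f x - f xstar))]
  have hsm := (abs_le.1 (hsmooth x y)).2
  have hcs : ⟪g, y - x⟫ ≤ ‖g‖ * ‖y - x‖ := real_inner_le_norm g (y - x)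
  have hsq : Real.sqrt (L/2) ^ 2 = L/2 := Real.sq_sqrt hL2
  have hsqa : Real.sqrt (f x - f xstar)^2 = f x - f xstar := Real.sq_sqrt ha
  nlinarith [norm_nonneg (y - x), mul_le_mul_of_nonneg_right hgb (norm_nonneg (y-x))]
end

section
/- Let E = ℝⁿ with the standard inner product, let C ⊆ E be a compact convex set satisfying the α-scaling inequality for some α > 0, let f : E → ℝ be convex, differentiable, and L-smooth (L > 0), and let c > 0 satisfy ‖∇f(x)‖ ≥ c for all x ∈ C. Let x* be a minimizer of f over C. Consider the Frank–Wolfe iterates defined by x₀ ∈ C and, for t ≥ 0, v_t a maximizer of z ↦ ⟨−∇f(x_t), z⟩ over C, s_t a minimizer over s ∈ [0,1] of s·⟨∇f(x_t), v_t − x_t⟩ + s²·(L/2)‖v_t − x_t‖², and x_{t+1} = x_t + s_t (v_t − x_t). Then for every t ≥ 0, f(x_{t+1}) − f(x*) ≤ max{1/2, 1 − αc/(2L)} · (f(x_t) − f(x*)); in particular f(x_t) − f(x*) ≤ (max{1/2, 1 − αc/(2L)})^t · (f(x₀) − f(x*)). -/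
/-!
By convexity, the primal gap `h = f x - f x⋆` is at most the Frank–Wolfe gap
`g = ⟪-∇f x, v - x⟫`, and the scaling inequality together with `‖∇f x‖ ≥ c` gives
`α c ‖v - x‖² ≤ g`. The short step minimises the quadratic upper model
`s ↦ -s g + s² L ‖v - x‖² / 2` on `[0, 1]`: if the minimiser is clipped at `1`, the model
decreases by at least `g / 2 ≥ h / 2`; otherwise it decreases by
`g² / (2 L ‖v - x‖²) ≥ α c h / (2 L)`.
-/

open RealInnerProductSpace Set Filter Topology

theorem frankWolfe_short_step_bound {h g D L a Δ : ℝ} (hL : 0 < L) (hh : 0 ≤ h)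
    (hhg : h ≤ g) (haD : a * D ≤ g)
    (hΔ : ∀ s ∈ Icc (0 : ℝ) 1, Δ ≤ s * -g + s ^ 2 * (L / 2) * D) :
    h + Δ ≤ max (1 / 2) (1 - a / (2 * L)) * h := by
  rcases le_or_gt (L * D) g with hLD | hLD
  · have hΔ₁ := hΔ 1 ⟨zero_le_one, le_rfl⟩
    calc h + Δ ≤ 1 / 2 * h := by nlinarith
      _ ≤ _ := mul_le_mul_of_nonneg_right (le_max_left _ _) hh
  · have hD₀ : 0 < D := pos_of_mul_pos_right (hh.trans hhg |>.trans_lt hLD) hL.le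
    have hLD₀ : 0 < L * D := mul_pos hL hD₀
    -- the unconstrained minimiser `g / (L D)` of the quadratic model lies in `[0, 1]`
    have hΔ₁ := hΔ (g / (L * D)) ⟨div_nonneg (hh.trans hhg) hLD₀.le, (div_le_one hLD₀).2 hLD.le⟩
    have hmodel : g / (L * D) * -g + (g / (L * D)) ^ 2 * (L / 2) * D = -(g ^ 2 / (2 * L * D)) := by
      field_simp; ring
    have hgain : a / (2 * L) * h ≤ g ^ 2 / (2 * L * D) := by
      rw [div_mul_eq_mul_div, div_le_div_iff₀ (by positivity) (by positivity)]
      nlinarith [mul_le_mul_of_nonneg_right haD hh, mul_le_mul_of_nonneg_left hhg (hh.trans hhg)]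
    calc h + Δ ≤ (1 - a / (2 * L)) * h := by linarith
      _ ≤ _ := mul_le_mul_of_nonneg_right (le_max_right _ _) hh

variable {E : Type*} [NormedAddCommGroup E] [InnerProductSpace ℝ E]

theorem ConvexOn.inner_sub_le_of_quadratic_minorant {f : E → ℝ} (hf : ConvexOn ℝ univ f)
    {x g : E} {K : ℝ} (hK : ∀ y, f x + ⟪g, y - x⟫ - K * ‖y - x‖ ^ 2 ≤ f y) (y : E) :
    ⟪g, y - x⟫ ≤ f y - f x := by
  have hslope : ∀ t ∈ Ioc (0 : ℝ) 1, ⟪g, y - x⟫ - K * ‖y - x‖ ^ 2 * t ≤ f y - f x := by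
    rintro t ⟨ht₀, ht₁⟩
    have hchord := hf.2 (mem_univ x) (mem_univ y) (sub_nonneg.2 ht₁) ht₀.le (sub_add_cancel 1 t)
    have hpoint : (1 - t) • x + t • y = x + t • (y - x) := by module
    have hlower := hK (x + t • (y - x))
    rw [hpoint, smul_eq_mul, smul_eq_mul] at hchord
    rw [add_sub_cancel_left, real_inner_smul_right, norm_smul, mul_pow, Real.norm_eq_abs,
      sq_abs] at hlower
    have hscaled : t * (⟪g, y - x⟫ - K * ‖y - x‖ ^ 2 * t) ≤ t * (f y - f x) := by linarith
    exact le_of_mul_le_mul_left hscaled ht₀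
  have hlim : Tendsto (fun t ↦ ⟪g, y - x⟫ - K * ‖y - x‖ ^ 2 * t) (𝓝[>] 0) (𝓝 ⟪g, y - x⟫) := by
    apply tendsto_nhdsWithin_of_tendsto_nhds
    exact (by fun_prop : Continuous fun t : ℝ ↦ ⟪g, y - x⟫ - K * ‖y - x‖ ^ 2 * t).tendsto' 0 _
      (by simp)
  refine le_of_tendsto hlim ?_
  filter_upwards [Ioc_mem_nhdsGT one_pos] with t ht using hslope t ht

theorem frankWolfe_step_contraction [CompleteSpace E] {f : E → ℝ} {L a s : ℝ} {x v xstar : E}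
    (hL : 0 < L) (hfconv : ConvexOn ℝ univ f)
    (hsmooth : ∀ x y, |f y - f x - ⟪gradient f x, y - x⟫| ≤ L / 2 * ‖y - x‖ ^ 2)
    (hxstar : f xstar ≤ f x) (hv : ⟪-gradient f x, xstar⟫ ≤ ⟪-gradient f x, v⟫)
    (hscale : a * ‖v - x‖ ^ 2 ≤ ⟪-gradient f x, v - x⟫)
    (hsmin : ∀ s' ∈ Icc (0 : ℝ) 1,
        s * ⟪gradient f x, v - x⟫ + s ^ 2 * (L / 2) * ‖v - x‖ ^ 2 ≤
          s' * ⟪gradient f x, v - x⟫ + s' ^ 2 * (L / 2) * ‖v - x‖ ^ 2) :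
    f (x + s • (v - x)) - f xstar ≤ max (1 / 2) (1 - a / (2 * L)) * (f x - f xstar) := by
  have hfirst := hfconv.inner_sub_le_of_quadratic_minorant (x := x) (g := gradient f x)
    (K := L / 2) (fun y ↦ by linarith [(abs_le.1 (hsmooth x y)).1]) xstar
  have hdescent : f (x + s • (v - x)) - f x ≤
      s * ⟪gradient f x, v - x⟫ + s ^ 2 * (L / 2) * ‖v - x‖ ^ 2 := by
    have hupper := (abs_le.1 (hsmooth x (x + s • (v - x)))).2
    rw [add_sub_cancel_left, real_inner_smul_right, norm_smul, mul_pow, Real.norm_eq_abs,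
      sq_abs] at hupper
    linarith
  have hgap : f x - f xstar ≤ ⟪-gradient f x, v - x⟫ := by
    simp only [inner_neg_left, inner_sub_right] at hv hfirst ⊢
    linarith
  have hbound := frankWolfe_short_step_bound (Δ := f (x + s • (v - x)) - f x) hL
    (sub_nonneg.2 hxstar) hgap hscale fun s' hs' ↦ by
      rw [inner_neg_left, neg_neg]
      exact hdescent.trans (hsmin s' hs')
  linarith

theorem frank_wolfe_linear_convergence_general {n : ℕ}
    (C : Set (EuclideanSpace ℝ (Fin n))) (α L c : ℝ)
    (hconv : Convex ℝ C) (hα : 0 < α) (hL : 0 < L)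
    (hscale : ∀ x ∈ C, ∀ w : EuclideanSpace ℝ (Fin n), ∀ v ∈ C,
        (∀ z ∈ C, ⟪w, z⟫ ≤ ⟪w, v⟫) → ⟪w, v - x⟫ ≥ α * ‖w‖ * ‖v - x‖ ^ 2)
    (f : EuclideanSpace ℝ (Fin n) → ℝ)
    (hfconv : ConvexOn ℝ Set.univ f)
    (hsmooth : ∀ x y, |f y - f x - ⟪gradient f x, y - x⟫| ≤ L / 2 * ‖y - x‖ ^ 2)
    (hgrad : ∀ x ∈ C, c ≤ ‖gradient f x‖)
    (xstar : EuclideanSpace ℝ (Fin n)) (hxstarC : xstar ∈ C)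
    (hxstar : ∀ z ∈ C, f xstar ≤ f z)
    (x v : ℕ → EuclideanSpace ℝ (Fin n)) (s : ℕ → ℝ)
    (hx0 : x 0 ∈ C)
    (hvC : ∀ t, v t ∈ C)
    (hvmax : ∀ t, ∀ z ∈ C, ⟪-gradient f (x t), z⟫ ≤ ⟪-gradient f (x t), v t⟫)
    (hsIcc : ∀ t, s t ∈ Set.Icc (0 : ℝ) 1)
    (hsmin : ∀ t, ∀ s' ∈ Set.Icc (0 : ℝ) 1,
        s t * ⟪gradient f (x t), v t - x t⟫ + (s t) ^ 2 * (L / 2) * ‖v t - x t‖ ^ 2 ≤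
          s' * ⟪gradient f (x t), v t - x t⟫ + s' ^ 2 * (L / 2) * ‖v t - x t‖ ^ 2)
    (hstep : ∀ t, x (t + 1) = x t + s t • (v t - x t)) :
    (∀ t, f (x (t + 1)) - f xstar ≤
        max (1 / 2) (1 - α * c / (2 * L)) * (f (x t) - f xstar)) ∧
    (∀ t, f (x t) - f xstar ≤
        (max (1 / 2) (1 - α * c / (2 * L))) ^ t * (f (x 0) - f xstar)) := by
  have hxC : ∀ t, x t ∈ C := by
    intro t
    induction t with
    | zero => exact hx0
    | succ t ih => exact hstep t ▸ hconv.add_smul_sub_mem ih (hvC t) (hsIcc t)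
  have hcontract : ∀ t, f (x (t + 1)) - f xstar ≤
      max (1 / 2) (1 - α * c / (2 * L)) * (f (x t) - f xstar) := by
    intro t
    have hscale_t : α * c * ‖v t - x t‖ ^ 2 ≤ ⟪-gradient f (x t), v t - x t⟫ := by
      have hscale_at := hscale (x t) (hxC t) _ (v t) (hvC t) (hvmax t)
      rw [norm_neg] at hscale_at
      have hgrad_le := mul_le_mul_of_nonneg_right (mul_le_mul_of_nonneg_left (hgrad (x t) (hxC t)) hα.le)
        (sq_nonneg ‖v t - x t‖)
      linarith
    rw [hstep t]
    exact frankWolfe_step_contraction hL hfconv hsmooth (hxstar _ (hxC t))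
      (hvmax t xstar hxstarC) hscale_t (hsmin t)
  refine ⟨hcontract, fun t ↦ le_geom (u := fun t ↦ f (x t) - f xstar) ?_ t fun k _ ↦ hcontract k⟩
  exact (le_max_left _ _).trans' (by norm_num)

/-- Linear convergence of the Frank–Wolfe algorithm on a compact convex set
satisfying the `α`-scaling inequality, for a convex, differentiable, `L`-smooth objective whose
gradient norm is bounded below by `c > 0` on the set. -/
theorem frank_wolfe_linear_convergence {n : ℕ}
    (C : Set (EuclideanSpace ℝ (Fin n))) (α L c : ℝ)
    (hC : IsCompact C) (hconv : Convex ℝ C) (hα : 0 < α) (hL : 0 < L) (hc : 0 < c)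
    (hscale : ∀ x ∈ C, ∀ w : EuclideanSpace ℝ (Fin n), ∀ v ∈ C,
        (∀ z ∈ C, ⟪w, z⟫ ≤ ⟪w, v⟫) → ⟪w, v - x⟫ ≥ α * ‖w‖ * ‖v - x‖ ^ 2)
    (f : EuclideanSpace ℝ (Fin n) → ℝ)
    (hfconv : ConvexOn ℝ Set.univ f) (hdiff : Differentiable ℝ f)
    (hsmooth : ∀ x y, |f y - f x - ⟪gradient f x, y - x⟫| ≤ L / 2 * ‖y - x‖ ^ 2)
    (hgrad : ∀ x ∈ C, c ≤ ‖gradient f x‖)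
    (xstar : EuclideanSpace ℝ (Fin n)) (hxstarC : xstar ∈ C)
    (hxstar : ∀ z ∈ C, f xstar ≤ f z)
    (x v : ℕ → EuclideanSpace ℝ (Fin n)) (s : ℕ → ℝ)
    (hx0 : x 0 ∈ C)
    (hvC : ∀ t, v t ∈ C)
    (hvmax : ∀ t, ∀ z ∈ C, ⟪-gradient f (x t), z⟫ ≤ ⟪-gradient f (x t), v t⟫)
    (hsIcc : ∀ t, s t ∈ Set.Icc (0 : ℝ) 1)
    (hsmin : ∀ t, ∀ s' ∈ Set.Icc (0 : ℝ) 1,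
        s t * ⟪gradient f (x t), v t - x t⟫ + (s t) ^ 2 * (L / 2) * ‖v t - x t‖ ^ 2 ≤
          s' * ⟪gradient f (x t), v t - x t⟫ + s' ^ 2 * (L / 2) * ‖v t - x t‖ ^ 2)
    (hstep : ∀ t, x (t + 1) = x t + s t • (v t - x t)) :
    (∀ t, f (x (t + 1)) - f xstar ≤
        max (1 / 2) (1 - α * c / (2 * L)) * (f (x t) - f xstar)) ∧
    (∀ t, f (x t) - f xstar ≤
        (max (1 / 2) (1 - α * c / (2 * L))) ^ t * (f (x 0) - f xstar)) :=
  frank_wolfe_linear_convergence_general C α L c hconv hα hL hscale f hfconv hsmooth hgrad xstar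
    hxstarC hxstar x v s hx0 hvC hvmax hsIcc hsmin hstep
end

section
/- Let E = ℝⁿ with the standard inner product, let C ⊆ E be a compact convex set satisfying the α-scaling inequality for some α > 0, let f : E → ℝ be convex, differentiable, and L-smooth (L > 0), let c > 0 satisfy ‖∇f(x)‖ ≥ c for all x ∈ C, and let x* be a minimizer of f over C. Fix x ∈ C, let v be a maximizer of z ↦ ⟨−∇f(x), z⟩ over C, let s* be a minimizer over s ∈ [0,1] of s·⟨∇f(x), v − x⟩ + s²·(L/2)‖v − x‖², and set x⁺ = x + s*(v − x). Then for every s ∈ [0,1], f(x⁺) − f(x*) ≤ (1 − s/2)(f(x) − f(x*)) + (s/2)(L s − α c)‖x − v‖². -/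
open RealInnerProductSpace

open Filter Set Topology in
/-- Convexity + differentiability gives the gradient inequality
`⟪∇f x, y - x⟫ ≤ f y - f x`. -/
lemma convex_gradient_ineq {n : ℕ} (f : EuclideanSpace ℝ (Fin n) → ℝ)
    (hfconv : ConvexOn ℝ Set.univ f) (hdiff : Differentiable ℝ f)
    (x y : EuclideanSpace ℝ (Fin n)) :
    ⟪gradient f x, y - x⟫ ≤ f y - f x := by
  set g := gradient f x
  have hg : HasFDerivAt f ((InnerProductSpace.toDual ℝ _) g) x :=
    (hdiff x).hasGradientAt
  have hline : HasDerivAt (fun t : ℝ => x + t • (y - x)) (y - x) 0 := by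
    simpa using ((hasDerivAt_id (0:ℝ)).smul_const (y - x)).const_add x
  have hφ : HasDerivAt (fun t : ℝ => f (x + t • (y - x))) ⟪g, y - x⟫ 0 := by
    have hg' : HasFDerivAt f ((InnerProductSpace.toDual ℝ _) g) (x + (0:ℝ) • (y - x)) := by
      simpa using hg
    have := hg'.comp_hasDerivAt (0:ℝ) hline
    simp [InnerProductSpace.toDual_apply_apply, real_inner_comm] at this
    exact this
  have hslope : Tendsto (slope (fun t : ℝ => f (x + t • (y - x))) 0)
      (𝓝[≠] (0:ℝ)) (𝓝 ⟪g, y - x⟫) := hasDerivAt_iff_tendsto_slope.1 hφ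
  have hslope' : Tendsto (slope (fun t : ℝ => f (x + t • (y - x))) 0)
      (𝓝[>] (0:ℝ)) (𝓝 ⟪g, y - x⟫) :=
    hslope.mono_left (nhdsWithin_mono _ fun t ht => ne_of_gt ht)
  refine le_of_tendsto hslope' ?_
  filter_upwards [Ioc_mem_nhdsGT_of_mem (Set.left_mem_Ico.2 one_pos)] with t ht
  have ht0 : 0 < t := ht.1
  have hconvt : f (x + t • (y - x)) ≤ (1 - t) * f x + t * f y := by
    have h := hfconv.2 (Set.mem_univ x) (Set.mem_univ y)
      (show (0:ℝ) ≤ 1 - t by linarith [ht.2]) (le_of_lt ht0) (by ring)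
    have hx : (1 - t) • x + t • y = x + t • (y - x) := by
      simp [smul_sub, sub_smul]; abel
    simpa [hx, smul_eq_mul] using h
  have : slope (fun t : ℝ => f (x + t • (y - x))) 0 t
      = (f (x + t • (y - x)) - f x) / t := by
    simp [slope_def_field]
  rw [this, div_le_iff₀ ht0]
  nlinarith [hconvt]

/-- One-step progress bound for the Frank–Wolfe algorithm on a compact convex
set satisfying the `α`-scaling inequality: for every `s ∈ [0,1]`,
`f(x⁺) - f(x*) ≤ (1 - s/2)(f(x) - f(x*)) + (s/2)(Ls - αc)‖x - v‖²`. -/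
theorem frank_wolfe_one_step_bound {n : ℕ}
    (C : Set (EuclideanSpace ℝ (Fin n))) (α L c : ℝ)
    (hC : IsCompact C) (hconv : Convex ℝ C) (hα : 0 < α) (hL : 0 < L) (hc : 0 < c)
    (hscale : ∀ x ∈ C, ∀ w : EuclideanSpace ℝ (Fin n), ∀ v ∈ C,
        (∀ z ∈ C, ⟪w, z⟫ ≤ ⟪w, v⟫) → ⟪w, v - x⟫ ≥ α * ‖w‖ * ‖v - x‖ ^ 2)
    (f : EuclideanSpace ℝ (Fin n) → ℝ)
    (hfconv : ConvexOn ℝ Set.univ f) (hdiff : Differentiable ℝ f)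
    (hsmooth : ∀ x y, |f y - f x - ⟪gradient f x, y - x⟫| ≤ L / 2 * ‖y - x‖ ^ 2)
    (hgrad : ∀ x ∈ C, c ≤ ‖gradient f x‖)
    (xstar : EuclideanSpace ℝ (Fin n)) (hxstarC : xstar ∈ C)
    (hxstar : ∀ z ∈ C, f xstar ≤ f z)
    (x : EuclideanSpace ℝ (Fin n)) (hxC : x ∈ C)
    (v : EuclideanSpace ℝ (Fin n)) (hvC : v ∈ C)
    (hvmax : ∀ z ∈ C, ⟪-gradient f x, z⟫ ≤ ⟪-gradient f x, v⟫)
    (sstar : ℝ) (hsstar : sstar ∈ Set.Icc (0 : ℝ) 1)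
    (hsmin : ∀ s' ∈ Set.Icc (0 : ℝ) 1,
        sstar * ⟪gradient f x, v - x⟫ + sstar ^ 2 * (L / 2) * ‖v - x‖ ^ 2 ≤
          s' * ⟪gradient f x, v - x⟫ + s' ^ 2 * (L / 2) * ‖v - x‖ ^ 2) :
    ∀ s ∈ Set.Icc (0 : ℝ) 1,
      f (x + sstar • (v - x)) - f xstar ≤
        (1 - s / 2) * (f x - f xstar) + s / 2 * (L * s - α * c) * ‖x - v‖ ^ 2 := by
  intro s hs
  set g := gradient f x with hgdef
  set D := ‖v - x‖ ^ 2 with hD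
  have hD0 : 0 ≤ D := by positivity
  -- smoothness at x⁺
  have hsm := hsmooth x (x + sstar • (v - x))
  have hrw : (x + sstar • (v - x)) - x = sstar • (v - x) := by abel
  rw [hrw, real_inner_smul_right, norm_smul] at hsm
  have hsm1 : f (x + sstar • (v - x)) ≤
      f x + sstar * ⟪g, v - x⟫ + sstar ^ 2 * (L / 2) * D := by
    have := abs_le.1 hsm
    have h2 : (‖sstar‖ * ‖v - x‖) ^ 2 = sstar ^ 2 * D := by
      rw [mul_pow]; simp [hD, Real.norm_eq_abs, sq_abs]
    nlinarith [this.2]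
  have hkey : f (x + sstar • (v - x)) ≤
      f x + s * ⟪g, v - x⟫ + s ^ 2 * (L / 2) * D :=
    le_trans hsm1 (by linarith [hsmin s hs])
  -- scaling inequality
  have hscale' := hscale x hxC (-g) v hvC hvmax
  rw [inner_neg_left, norm_neg] at hscale'
  have hgD : α * c * D ≤ α * ‖g‖ * D :=
    mul_le_mul_of_nonneg_right (mul_le_mul_of_nonneg_left (hgrad x hxC) hα.le) hD0
  have hk2 : ⟪g, v - x⟫ ≤ -(α * c * D) := by
    have : α * ‖g‖ * D ≤ -⟪g, v - x⟫ := hscale'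
    linarith
  -- convexity bound
  have hcv : ⟪g, xstar - x⟫ ≤ f xstar - f x :=
    convex_gradient_ineq f hfconv hdiff x xstar
  have hvx : ⟪g, v - xstar⟫ ≤ 0 := by
    have := hvmax xstar hxstarC
    rw [inner_neg_left, inner_neg_left] at this
    rw [inner_sub_right]
    linarith
  have hk3 : ⟪g, v - x⟫ ≤ -(f x - f xstar) := by
    have hdecomp : ⟪g, v - x⟫ = ⟪g, v - xstar⟫ + ⟪g, xstar - x⟫ := by
      rw [inner_sub_right, inner_sub_right, inner_sub_right]; ring
    linarith
  have hnorm : ‖x - v‖ ^ 2 = D := by rw [hD, norm_sub_rev]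
  rw [hnorm]
  have hfx : f xstar ≤ f x := hxstar x hxC
  have hs0 : 0 ≤ s := hs.1
  nlinarith [hkey, mul_le_mul_of_nonneg_left hk2 hs0, mul_le_mul_of_nonneg_left hk3 hs0]
end

section
/- Let E be a real inner product space, x₀ ∈ E, and r > 0. Then the closed ball B = { x ∈ E : ‖x − x₀‖ ≤ r } is (1/(2r))-strongly convex: for all x, y ∈ B, all t ∈ [0,1], and all z ∈ E with ‖z‖ = 1, the point (1−t)x + t y + (1/(2r)) t(1−t)‖x−y‖² z belongs to B. -/
/-!
With `m = (1 - t) • x + t • y` and `d = t (1 - t) ‖x - y‖²`, the parallelogram law gives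
`‖m - x₀‖² = (1 - t) ‖x - x₀‖² + t ‖y - x₀‖² - d ≤ r² - d`. The tangent line of `√` at `r²`
lies above it, so `‖m - x₀‖ ≤ √(r² - d) ≤ r - d / (2r)`, which leaves room for a step of
length `d / (2r)` in any direction.
-/

theorem norm_one_sub_smul_add_smul_sub_sq {E : Type*} [NormedAddCommGroup E]
    [InnerProductSpace ℝ E] (x y x₀ : E) (t : ℝ) :
    ‖(1 - t) • x + t • y - x₀‖ ^ 2 =
      (1 - t) * ‖x - x₀‖ ^ 2 + t * ‖y - x₀‖ ^ 2 - t * (1 - t) * ‖x - y‖ ^ 2 := by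
  have hm : (1 - t) • x + t • y - x₀ = (1 - t) • (x - x₀) + t • (y - x₀) := by module
  have hxy : x - y = (x - x₀) - (y - x₀) := by abel
  rw [hm, hxy]
  generalize x - x₀ = a, y - x₀ = b
  rw [norm_add_sq_real, norm_sub_sq_real, norm_smul, norm_smul, real_inner_smul_left,
    real_inner_smul_right, Real.norm_eq_abs, Real.norm_eq_abs, mul_pow, mul_pow, sq_abs, sq_abs]
  ring

theorem add_div_two_mul_le_of_sq_le_sq_sub {s r d : ℝ} (hr : 0 < r) (h : s ^ 2 ≤ r ^ 2 - d) :
    s + d / (2 * r) ≤ r := by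
  have hd : d ≤ r ^ 2 := by nlinarith [sq_nonneg s]
  have hpos : 0 ≤ r - d / (2 * r) := by
    rw [sub_nonneg, div_le_iff₀ (by positivity)]
    nlinarith
  have hsq : s ^ 2 ≤ (r - d / (2 * r)) ^ 2 := by
    have : (r - d / (2 * r)) ^ 2 = r ^ 2 - d + (d / (2 * r)) ^ 2 := by
      field_simp
      ring
    nlinarith [sq_nonneg (d / (2 * r))]
  linarith [abs_le_of_sq_le_sq' hsq hpos]

/-- In a real inner product space, the closed ball of radius `r > 0` around
`x₀` is `(1/(2r))`-strongly convex. -/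
theorem closedBall_strongly_convex {E : Type*}
    [NormedAddCommGroup E] [InnerProductSpace ℝ E]
    (x₀ : E) (r : ℝ) (hr : 0 < r) :
    ∀ x ∈ {u : E | ‖u - x₀‖ ≤ r}, ∀ y ∈ {u : E | ‖u - x₀‖ ≤ r},
      ∀ t ∈ Set.Icc (0 : ℝ) 1, ∀ z : E, ‖z‖ = 1 →
        (1 - t) • x + t • y + (1 / (2 * r) * t * (1 - t) * ‖x - y‖ ^ 2) • z ∈
          {u : E | ‖u - x₀‖ ≤ r} := by
  intro x hx y hy t ⟨ht0, ht1⟩ z hz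
  simp only [Set.mem_ofPred_eq] at hx hy ⊢
  set m := (1 - t) • x + t • y
  set d := t * (1 - t) * ‖x - y‖ ^ 2
  have hd : 0 ≤ d := mul_nonneg (mul_nonneg ht0 (sub_nonneg.2 ht1)) (sq_nonneg _)
  have hm : ‖m - x₀‖ ^ 2 ≤ r ^ 2 - d := by
    rw [norm_one_sub_smul_add_smul_sub_sq]
    have hx2 : ‖x - x₀‖ ^ 2 ≤ r ^ 2 := pow_le_pow_left₀ (norm_nonneg _) hx 2
    have hy2 : ‖y - x₀‖ ^ 2 ≤ r ^ 2 := pow_le_pow_left₀ (norm_nonneg _) hy 2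
    nlinarith
  calc ‖m + (1 / (2 * r) * t * (1 - t) * ‖x - y‖ ^ 2) • z - x₀‖
      = ‖(m - x₀) + (d / (2 * r)) • z‖ := by
        congr 1
        rw [show 1 / (2 * r) * t * (1 - t) * ‖x - y‖ ^ 2 = d / (2 * r) by ring]
        abel
    _ ≤ ‖m - x₀‖ + d / (2 * r) := by
        refine (norm_add_le _ _).trans_eq ?_
        rw [norm_smul, hz, mul_one, Real.norm_of_nonneg (by positivity)]
    _ ≤ r := add_div_two_mul_le_of_sq_le_sq_sub hr hm
end

section
/- Let E be a real inner product space, x₀ ∈ E, r > 0, and let B = { x ∈ E : ‖x − x₀‖ ≤ r }. Then for every x ∈ B and every v ∈ E with ‖v − x₀‖ = r, one has ⟨v − x₀, v − x⟩ ≥ (1/(2r)) ‖v − x₀‖ ‖v − x‖². In other words, the outer normal v − x₀ at any boundary point v of B satisfies the (1/(2r))-scaling inequality against every point of B. -/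
open RealInnerProductSpace

/-- For the closed ball `B = {x | ‖x - x₀‖ ≤ r}` in a real inner product
space, every boundary point `v` (with `‖v - x₀‖ = r`) and every `x ∈ B` satisfy the
`(1/(2r))`-scaling inequality `⟪v - x₀, v - x⟫ ≥ (1/(2r)) ‖v - x₀‖ ‖v - x‖²`. -/
theorem closedBall_normal_scaling_inequality {E : Type*}
    [NormedAddCommGroup E] [InnerProductSpace ℝ E]
    (x₀ : E) (r : ℝ) (hr : 0 < r) :
    ∀ x ∈ {u : E | ‖u - x₀‖ ≤ r}, ∀ v : E, ‖v - x₀‖ = r →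
      ⟪v - x₀, v - x⟫ ≥ 1 / (2 * r) * ‖v - x₀‖ * ‖v - x‖ ^ 2 := by
  intro x hx v hv
  have hx' : ‖x - x₀‖ ≤ r := hx
  have key : ‖(v - x₀) - (v - x)‖ ^ 2 =
      ‖v - x₀‖ ^ 2 - 2 * ⟪v - x₀, v - x⟫ + ‖v - x‖ ^ 2 := norm_sub_sq_real _ _
  have h1 : (v - x₀) - (v - x) = x - x₀ := by abel
  rw [h1] at key
  have hsq : ‖x - x₀‖ ^ 2 ≤ r ^ 2 := by
    have := norm_nonneg (x - x₀)
    nlinarith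
  rw [hv]
  have : 1 / (2 * r) * r * ‖v - x‖ ^ 2 = ‖v - x‖ ^ 2 / 2 := by
    field_simp
  rw [this]
  nlinarith [key, hsq, hv]
end
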